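/- arXiv:2105.04200 — 8 statements merged into one kernel-verified Lean document; each statement's English description precedes it below -/
import Mathlib

section
/- Let m ≥ 1 and x_0 = 0, x_1,...,x_{m-1} be positive integers. Define S = ⋃_{j=0}^{m-1} (j + m·x_j + m·ℕ). Then S is closed under addition if and only if for all s,t in {1,...,m-1} with s+t < m, we have x_{s+t} ≤ x_s + x_t and x_{m-s-t} ≤ x_{m-s} + x_{m-t} + 1 (the latter inequality for all s,t with 1 ≤ s,t and s+t < m). -/
/-- Let `m ≥ 1`, `x 0 = 0` and `x j ≥ 1` for `1 ≤ j ≤ m-1`, and set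
`S = ⋃_{j=0}^{m-1} (j + m·x_j + m·ℕ)`.  Then `S` is closed under addition iff
the NSG-inequalities `x (s+t) ≤ x s + x t` and
`x (m-s-t) ≤ x (m-s) + x (m-t) + 1` hold for all `s, t ≥ 1` with `s + t < m`. -/
theorem stmt_1 (m : ℕ) (hm : 1 ≤ m) (x : ℕ → ℕ) (hx0 : x 0 = 0)
    (hxpos : ∀ j, 1 ≤ j → j < m → 1 ≤ x j)
    (S : Set ℕ)
    (hS : S = ⋃ j ∈ Finset.range m, {n : ℕ | ∃ k : ℕ, n = j + m * x j + m * k}) :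
    (∀ a ∈ S, ∀ b ∈ S, a + b ∈ S) ↔
      (∀ s t : ℕ, 1 ≤ s → 1 ≤ t → s + t < m →
        x (s + t) ≤ x s + x t ∧ x (m - s - t) ≤ x (m - s) + x (m - t) + 1) := by
  have hm0 : 0 < m := hm
  have key : ∀ u v : ℕ, u < m → (u + m * v) % m = u ∧ (u + m * v) / m = v := by
    intro u v hu
    constructor
    · rw [Nat.add_mul_mod_self_left, Nat.mod_eq_of_lt hu]
    · rw [Nat.add_mul_div_left _ _ hm0, Nat.div_eq_of_lt hu, Nat.zero_add]
  have mem : ∀ n : ℕ, n ∈ S ↔ x (n % m) ≤ n / m := by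
    intro n
    rw [hS]
    simp only [Set.mem_iUnion, Set.mem_setOf_eq, Finset.mem_range, exists_prop]
    constructor
    · rintro ⟨j, hj, k, rfl⟩
      have e : j + m * x j + m * k = j + m * (x j + k) := by ring
      obtain ⟨h1, h2⟩ := key j (x j + k) hj
      rw [e, h1, h2]
      omega
    · intro h
      refine ⟨n % m, Nat.mod_lt _ hm0, n / m - x (n % m), ?_⟩
      have h1 := Nat.mod_add_div n m
      have h2 : m * x (n % m) + m * (n / m - x (n % m)) = m * (n / m) := by
        rw [← Nat.mul_add, Nat.add_sub_cancel' h]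
      omega
  constructor
  · intro hcl s t hs ht hst
    constructor
    · have ha : s + m * x s ∈ S := by
        rw [mem]
        obtain ⟨h1, h2⟩ := key s (x s) (by omega)
        rw [h1, h2]
      have hb : t + m * x t ∈ S := by
        rw [mem]
        obtain ⟨h1, h2⟩ := key t (x t) (by omega)
        rw [h1, h2]
      have hab := (mem _).1 (hcl _ ha _ hb)
      have e : s + m * x s + (t + m * x t) = (s + t) + m * (x s + x t) := by ring
      rw [e] at hab
      obtain ⟨h1, h2⟩ := key (s + t) (x s + x t) hst
      rw [h1, h2] at hab
      exact hab
    · have hs' : m - s < m := by omega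
      have ht' : m - t < m := by omega
      have ha : (m - s) + m * x (m - s) ∈ S := by
        rw [mem]
        obtain ⟨h1, h2⟩ := key (m - s) (x (m - s)) hs'
        rw [h1, h2]
      have hb : (m - t) + m * x (m - t) ∈ S := by
        rw [mem]
        obtain ⟨h1, h2⟩ := key (m - t) (x (m - t)) ht'
        rw [h1, h2]
      have hab := (mem _).1 (hcl _ ha _ hb)
      have e1 : (m - s) + (m - t) = (m - s - t) + m := by omega
      have e : (m - s) + m * x (m - s) + ((m - t) + m * x (m - t))
          = (m - s - t) + m * (x (m - s) + x (m - t) + 1) := by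
        calc (m - s) + m * x (m - s) + ((m - t) + m * x (m - t))
            = ((m - s) + (m - t)) + (m * x (m - s) + m * x (m - t)) := by ring
          _ = ((m - s - t) + m) + (m * x (m - s) + m * x (m - t)) := by rw [e1]
          _ = (m - s - t) + m * (x (m - s) + x (m - t) + 1) := by ring
      rw [e] at hab
      obtain ⟨h1, h2⟩ := key (m - s - t) (x (m - s) + x (m - t) + 1) (by omega)
      rw [h1, h2] at hab
      exact hab
  · intro hineq a ha b hb
    rw [mem] at ha hb ⊢
    set s := a % m with hsd
    set t := b % m with htd
    set q := a / m with hqd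
    set r := b / m with hrd
    have hsm : s < m := Nat.mod_lt _ hm0
    have htm : t < m := Nat.mod_lt _ hm0
    have ea : a = s + m * q := (Nat.mod_add_div a m).symm
    have eb : b = t + m * r := (Nat.mod_add_div b m).symm
    by_cases hc : s + t < m
    · have e : a + b = (s + t) + m * (q + r) := by rw [ea, eb]; ring
      rw [e]
      obtain ⟨h1, h2⟩ := key (s + t) (q + r) hc
      rw [h1, h2]
      rcases Nat.eq_zero_or_pos s with hs0 | hs1
      · rw [hs0, Nat.zero_add]; omega
      rcases Nat.eq_zero_or_pos t with ht0 | ht1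
      · rw [ht0, Nat.add_zero]; omega
      have := (hineq s t hs1 ht1 hc).1
      omega
    · push_neg at hc
      have e1 : s + t = (s + t - m) + m := by omega
      have e : a + b = (s + t - m) + m * (q + r + 1) := by
        rw [ea, eb]
        calc s + m * q + (t + m * r) = (s + t) + (m * q + m * r) := by ring
          _ = ((s + t - m) + m) + (m * q + m * r) := by rw [← e1]
          _ = (s + t - m) + m * (q + r + 1) := by ring
      rw [e]
      obtain ⟨h1, h2⟩ := key (s + t - m) (q + r + 1) (by omega)
      rw [h1, h2]
      rcases Nat.eq_or_lt_of_le hc with heq | hlt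
      · have : s + t - m = 0 := by omega
        rw [this, hx0]
        omega
      · have h := (hineq (m - s) (m - t) (by omega) (by omega) (by omega)).2
        have e2 : m - (m - s) = s := by omega
        have e3 : m - (m - t) = t := by omega
        have e4 : s - (m - t) = s + t - m := by omega
        rw [e2, e3, e4] at h
        omega
end

section
/- There are at most 2^{g-1} numerical semigroups of genus g, for every g ≥ 1. -/
/-- A numerical semigroup. -/
def IsNumericalSemigroup (S : Set ℕ) : Prop :=
  0 ∈ S ∧ (∀ a ∈ S, ∀ b ∈ S, a + b ∈ S) ∧ Sᶜ.Finite

namespace NSAux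

/-- The multiplicity: least nonzero element. -/
noncomputable def mult (S : Set ℕ) : ℕ := sInf {n | n ∈ S ∧ n ≠ 0}

/-- Number of gaps congruent to `i` mod the multiplicity. -/
noncomputable def kv (S : Set ℕ) (i : ℕ) : ℕ := {x | x ∉ S ∧ x % mult S = i}.ncard

/-- Partial sums of the Kunz vector. -/
noncomputable def cv (S : Set ℕ) (j : ℕ) : ℕ := ∑ i ∈ Finset.range (j + 1), kv S i

/-- The set of intermediate partial sums. -/
noncomputable def PS (S : Set ℕ) : Finset ℕ := (Finset.Ico 1 (mult S - 1)).image (cv S)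

variable {S : Set ℕ}

lemma mult_spec (hS : IsNumericalSemigroup S) : mult S ∈ S ∧ mult S ≠ 0 := by
  have hinf : S.Infinite := by
    have := hS.2.2.infinite_compl
    rwa [compl_compl] at this
  have hne : {n | n ∈ S ∧ n ≠ 0}.Nonempty := by
    obtain ⟨x, hx⟩ := (hinf.diff (Set.finite_singleton 0)).nonempty
    exact ⟨x, hx.1, by simpa using hx.2⟩
  exact Nat.sInf_mem hne

lemma one_not_mem (hS : IsNumericalSemigroup S) (hg : Sᶜ.ncard ≠ 0) : 1 ∉ S := by
  intro h1
  have hall : ∀ n, n ∈ S := by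
    intro n
    induction n with
    | zero => exact hS.1
    | succ n ih => exact hS.2.1 n ih 1 h1
  have : Sᶜ = ∅ := by
    ext x; simp [hall x]
  rw [this] at hg
  simp at hg

lemma two_le_mult (hS : IsNumericalSemigroup S) (h1 : 1 ∉ S) : 2 ≤ mult S := by
  have hs := mult_spec hS
  rcases Nat.lt_or_ge (mult S) 2 with h | h
  · interval_cases h' : (mult S)
    · exact absurd rfl hs.2
    · exact absurd hs.1 (by simpa [h'] using h1)
  · exact h

lemma mul_mem (hS : IsNumericalSemigroup S) (t : ℕ) : t * mult S ∈ S := by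
  induction t with
  | zero => simpa using hS.1
  | succ t ih =>
      have := hS.2.1 _ ih _ (mult_spec hS).1
      simpa [Nat.succ_mul] using this

lemma up_mem (hS : IsNumericalSemigroup S) {y : ℕ} (hy : y ∈ S) (t : ℕ) :
    y + t * mult S ∈ S := hS.2.1 y hy _ (mul_mem hS t)

lemma kv_zero (hS : IsNumericalSemigroup S) : kv S 0 = 0 := by
  have : {x | x ∉ S ∧ x % mult S = 0} = ∅ := by
    ext x
    simp only [Set.mem_setOf_eq, Set.mem_empty_iff_false, iff_false, not_and]
    intro hx hmod
    have hx' : x = (x / mult S) * mult S :=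
      (Nat.div_mul_cancel (Nat.dvd_of_mod_eq_zero hmod)).symm
    exact hx (hx' ▸ mul_mem hS (x / mult S))
  rw [kv, this, Set.ncard_empty]

lemma class_iff (hS : IsNumericalSemigroup S) {i : ℕ} (hi1 : 1 ≤ i) (him : i < mult S)
    (x : ℕ) : (x ∉ S ∧ x % mult S = i) ↔ (x % mult S = i ∧ x / mult S < kv S i) := by
  set m := mult S with hm
  have hm0 : 0 < m := by omega
  set B : Set ℕ := {t | i + t * m ∉ S} with hB
  have hBfin : B.Finite := by
    have : B = (fun t => i + t * m) ⁻¹' Sᶜ := rfl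
    rw [this]
    apply Set.Finite.preimage _ hS.2.2
    intro a _ b _ hab
    have := Nat.add_left_cancel hab
    exact Nat.eq_of_mul_eq_mul_right hm0 this
  have hBc : Bᶜ.Nonempty := by
    by_contra hc
    rw [Set.not_nonempty_iff_eq_empty, ← Set.compl_univ, compl_inj_iff] at hc
    exact (hc ▸ Set.infinite_univ) hBfin
  set n := sInf Bᶜ with hn
  have hnS : i + n * m ∈ S := by
    have := Nat.sInf_mem hBc
    simpa [hB] using this
  have hBeq : B = Set.Iio n := by
    ext t
    simp only [Set.mem_Iio]
    constructor
    · intro ht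
      by_contra hle
      push_neg at hle
      have : i + t * m = (i + n * m) + (t - n) * m := by
        have : n * m + (t - n) * m = t * m := by
          rw [← Nat.add_mul]; congr 1; omega
        omega
      exact ht (this ▸ up_mem hS hnS (t - n))
    · intro ht
      have := Nat.notMem_of_lt_sInf (by rwa [← hn] : t < sInf Bᶜ)
      simpa [hB] using this
  have hxdm : ∀ y : ℕ, y % m = i → i + y / m * m = y := by
    intro y hy
    rw [← hy]
    exact Nat.mod_add_div' y m
  have hA : {x | x ∉ S ∧ x % m = i} = (fun t => i + t * m) '' B := by
    ext x
    simp only [Set.mem_setOf_eq, Set.mem_image]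
    constructor
    · rintro ⟨hxS, hxm⟩
      exact ⟨x / m, by simpa [hB, hxdm x hxm] using hxS, hxdm x hxm⟩
    · rintro ⟨t, ht, rfl⟩
      refine ⟨ht, ?_⟩
      rw [Nat.add_mul_mod_self_right, Nat.mod_eq_of_lt him]
  have hdiv : ∀ t : ℕ, (i + t * m) / m = t := by
    intro t
    rw [Nat.add_mul_div_right _ _ hm0, Nat.div_eq_of_lt him]
    omega
  have hk : kv S i = n := by
    rw [kv, ← hm, hA, Set.ncard_image_of_injOn, hBeq, ← Finset.coe_range,
      Set.ncard_coe_finset, Finset.card_range]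
    intro a _ b _ hab
    have := Nat.add_left_cancel hab
    exact Nat.eq_of_mul_eq_mul_right hm0 this
  rw [hk]
  constructor
  · rintro ⟨hxS, hxm⟩
    refine ⟨hxm, ?_⟩
    have hx : x ∈ (fun t => i + t * m) '' B := hA ▸ ⟨hxS, hxm⟩
    obtain ⟨t, htB, rfl⟩ := hx
    rw [hdiv t]
    rw [hBeq] at htB
    exact htB
  · rintro ⟨hxm, hlt⟩
    refine ⟨?_, hxm⟩
    have hmem : x / m ∈ B := by rw [hBeq]; exact hlt
    rw [hB] at hmem
    simpa [hxdm x hxm] using hmem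

lemma mem_iff (hS : IsNumericalSemigroup S) (x : ℕ) :
    x ∈ S ↔ (x % mult S = 0 ∨ kv S (x % mult S) ≤ x / mult S) := by
  have hm0 : 0 < mult S := Nat.pos_of_ne_zero (mult_spec hS).2
  by_cases h0 : x % mult S = 0
  · have hx' : x = (x / mult S) * mult S :=
      (Nat.div_mul_cancel (Nat.dvd_of_mod_eq_zero h0)).symm
    have hx : x ∈ S := hx' ▸ mul_mem hS (x / mult S)
    simp [hx, h0]
  · have hi1 : 1 ≤ x % mult S := by omega
    have him : x % mult S < mult S := Nat.mod_lt _ hm0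
    have hc := class_iff hS hi1 him x
    constructor
    · intro hx
      right
      by_contra hlt
      push_neg at hlt
      exact (hc.mpr ⟨rfl, hlt⟩).1 hx
    · rintro (h | h)
      · exact absurd h h0
      · by_contra hx
        have := (hc.mp ⟨hx, rfl⟩).2
        omega

lemma kv_pos (hS : IsNumericalSemigroup S) {i : ℕ} (hi1 : 1 ≤ i) (him : i < mult S) :
    1 ≤ kv S i := by
  have hiS : i ∉ S := by
    intro hiS
    have hle : mult S ≤ i := Nat.sInf_le ⟨hiS, by omega⟩
    omega
  have hc := (class_iff hS hi1 him i).mp ⟨hiS, Nat.mod_eq_of_lt him⟩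
  exact Nat.lt_of_le_of_lt (Nat.zero_le _) hc.2

lemma sum_kv (hS : IsNumericalSemigroup S) :
    ∑ i ∈ Finset.range (mult S), kv S i = Sᶜ.ncard := by
  classical
  have hm0 : 0 < mult S := Nat.pos_of_ne_zero (mult_spec hS).2
  set G : Finset ℕ := hS.2.2.toFinset with hG
  have hkv : ∀ i, kv S i = (G.filter (fun x => x % mult S = i)).card := by
    intro i
    have : {x | x ∉ S ∧ x % mult S = i} = ↑(G.filter (fun x => x % mult S = i)) := by
      ext x
      simp [hG, Set.Finite.mem_toFinset]
    rw [kv, this, Set.ncard_coe_finset]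
  have hsum : ∑ i ∈ Finset.range (mult S), (G.filter (fun x => x % mult S = i)).card
      = G.card :=
    (Finset.card_eq_sum_card_fiberwise
      (fun x _ => Finset.mem_range.2 (Nat.mod_lt x hm0))).symm
  calc ∑ i ∈ Finset.range (mult S), kv S i
      = ∑ i ∈ Finset.range (mult S), (G.filter (fun x => x % mult S = i)).card :=
        Finset.sum_congr rfl fun i _ => hkv i
    _ = G.card := hsum
    _ = Sᶜ.ncard := by rw [hG, Set.ncard_eq_toFinset_card _ hS.2.2]

lemma cv_zero (hS : IsNumericalSemigroup S) : cv S 0 = 0 := by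
  simp [cv, kv_zero hS]

lemma cv_last (hS : IsNumericalSemigroup S) : cv S (mult S - 1) = Sᶜ.ncard := by
  have hm0 : 0 < mult S := Nat.pos_of_ne_zero (mult_spec hS).2
  have h : mult S - 1 + 1 = mult S := by omega
  rw [cv, h, sum_kv hS]

lemma cv_lt (hS : IsNumericalSemigroup S) {a b : ℕ} (hab : a < b) (hb : b < mult S) :
    cv S a < cv S b := by
  have hsub : insert b (Finset.range (a + 1)) ⊆ Finset.range (b + 1) := by
    intro x hx
    simp only [Finset.mem_insert, Finset.mem_range] at hx ⊢
    omega
  have hnot : b ∉ Finset.range (a + 1) := by simp; omega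
  have h1 : kv S b + cv S a ≤ cv S b := by
    rw [cv, ← Finset.sum_insert hnot]
    exact Finset.sum_le_sum_of_subset hsub
  have := kv_pos hS (by omega : 1 ≤ b) hb
  omega

lemma cv_succ (S : Set ℕ) (j : ℕ) : cv S (j + 1) = cv S j + kv S (j + 1) :=
  Finset.sum_range_succ _ _

lemma PS_card (hS : IsNumericalSemigroup S) : (PS S).card = mult S - 2 := by
  have hinj : Set.InjOn (cv S) ↑(Finset.Ico 1 (mult S - 1)) := by
    intro a ha b hb hab
    simp only [Finset.coe_Ico, Set.mem_Ico] at ha hb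
    rcases lt_trichotomy a b with h | h | h
    · exact absurd hab (Nat.ne_of_lt (cv_lt hS h (by omega)))
    · exact h
    · exact absurd hab.symm (Nat.ne_of_lt (cv_lt hS h (by omega)))
  rw [PS, Finset.card_image_of_injOn hinj, Nat.card_Ico]
  omega

end NSAux

open NSAux in
/-- There are at most `2^(g-1)` numerical semigroups of genus `g ≥ 1`. -/
theorem stmt_4 (g : ℕ) (hg : 1 ≤ g) :
    Nat.card {S : Set ℕ // IsNumericalSemigroup S ∧ Sᶜ.ncard = g} ≤ 2 ^ (g - 1) := by
  classical
  set T : Finset (Finset ℕ) := (Finset.Icc 1 (g - 1)).powerset with hT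
  have key : ∀ S : Set ℕ, IsNumericalSemigroup S → Sᶜ.ncard = g → PS S ∈ T := by
    intro S hS hgS
    rw [hT, Finset.mem_powerset]
    intro x hx
    rw [PS, Finset.mem_image] at hx
    obtain ⟨j, hj, rfl⟩ := hx
    rw [Finset.mem_Ico] at hj
    have hlow : cv S 0 < cv S j := cv_lt hS (by omega) (by omega)
    have hhigh : cv S j < cv S (mult S - 1) := cv_lt hS (by omega) (by omega)
    rw [cv_zero hS] at hlow
    rw [cv_last hS, hgS] at hhigh
    rw [Finset.mem_Icc]
    omega
  set f : {S : Set ℕ // IsNumericalSemigroup S ∧ Sᶜ.ncard = g} → {A : Finset ℕ // A ∈ T} :=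
    fun s => ⟨PS s.1, key s.1 s.2.1 s.2.2⟩ with hf
  have hinj : Function.Injective f := by
    rintro ⟨S, hS, hgS⟩ ⟨S', hS', hgS'⟩ h
    simp only [hf, Subtype.mk.injEq] at h ⊢
    have h1 : 1 ∉ S := one_not_mem hS (by omega)
    have h1' : 1 ∉ S' := one_not_mem hS' (by omega)
    have hm2 : 2 ≤ mult S := two_le_mult hS h1
    have hm2' : 2 ≤ mult S' := two_le_mult hS' h1'
    have hmm : mult S = mult S' := by
      have c1 := PS_card hS
      have c2 := PS_card hS'
      rw [h] at c1
      omega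
    have hcard : (PS S).card = mult S - 2 := PS_card hS
    have hcard' : (PS S').card = mult S - 2 := by rw [PS_card hS', ← hmm]
    have hcveq : ∀ j : ℕ, 1 ≤ j → j ≤ mult S - 2 → cv S j = cv S' j := by
      have hmono : StrictMono (fun x : Fin (mult S - 2) => cv S (x + 1)) := by
        intro a b hab
        exact cv_lt hS (by omega) (by have := b.2; omega)
      have hmono' : StrictMono (fun x : Fin (mult S - 2) => cv S' (x + 1)) := by
        intro a b hab
        refine cv_lt hS' (by omega) ?_
        rw [← hmm]; have := b.2; omega
      have hmem : ∀ x : Fin (mult S - 2), cv S (x + 1) ∈ PS S := by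
        intro x
        rw [PS, Finset.mem_image]
        exact ⟨x + 1, Finset.mem_Ico.2 ⟨by omega, by have := x.2; omega⟩, rfl⟩
      have hmem' : ∀ x : Fin (mult S - 2), cv S' (x + 1) ∈ PS S := by
        intro x
        rw [h, PS, Finset.mem_image]
        refine ⟨x + 1, Finset.mem_Ico.2 ⟨by omega, ?_⟩, rfl⟩
        rw [← hmm]; have := x.2; omega
      have e1 := Finset.orderEmbOfFin_unique hcard hmem hmono
      have e2 := Finset.orderEmbOfFin_unique hcard hmem' hmono'
      intro j hj1 hj2
      have := congrFun (e1.trans e2.symm) ⟨j - 1, by omega⟩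
      simpa [Nat.sub_add_cancel hj1] using this
    have hcvall : ∀ j : ℕ, j ≤ mult S - 1 → cv S j = cv S' j := by
      intro j hj
      rcases Nat.eq_or_lt_of_le hj with hje | hjlt
      · have e1 : cv S (mult S - 1) = g := by rw [cv_last hS, hgS]
        have e2 : cv S' (mult S - 1) = g := by rw [hmm, cv_last hS', hgS']
        rw [hje, e1, e2]
      · rcases Nat.eq_zero_or_pos j with hj0 | hj0
        · rw [hj0, cv_zero hS, cv_zero hS']
        · exact hcveq j hj0 (by omega)
    have hkveq : ∀ i : ℕ, 1 ≤ i → i < mult S → kv S i = kv S' i := by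
      intro i hi1 him
      obtain ⟨j, rfl⟩ : ∃ j, i = j + 1 := ⟨i - 1, by omega⟩
      have e1 := cv_succ S j
      have e2 := cv_succ S' j
      have c1 := hcvall j (by omega)
      have c2 := hcvall (j + 1) (by omega)
      omega
    ext x
    rw [mem_iff hS x, mem_iff hS' x, ← hmm]
    by_cases h0 : x % mult S = 0
    · simp [h0]
    · have hm0 : 0 < mult S := by omega
      rw [hkveq (x % mult S) (by omega) (Nat.mod_lt _ hm0)]
  have hle : Nat.card {S : Set ℕ // IsNumericalSemigroup S ∧ Sᶜ.ncard = g}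
      ≤ Nat.card {A : Finset ℕ // A ∈ T} := Nat.card_le_card_of_injective f hinj
  have hcardT : Nat.card {A : Finset ℕ // A ∈ T} = 2 ^ (g - 1) := by
    rw [Nat.card_eq_fintype_card, Fintype.card_coe, hT, Finset.card_powerset, Nat.card_Icc]
    congr 1
  omega
end

section
/- The decorated rooted tree T(n_1,...,n_k), defined recursively by: the root has k children, the i-th child being the root of T(n_{i+1},...,n_k, n_i − 1) with the last entry n_i − 1 omitted when n_i = 1 (and T() being a single leaf), has exactly ∏_{i=1}^k (n_i + 1) vertices when all n_i are finite positive integers. -/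
/-!
The product `P l = ∏ (n_i + 1)` satisfies the same recursion as the vertex count. For
`l = a :: t`, the first child is labelled `t ++ [a - 1]` (or `t` when `a = 1`), which contributes
`a * P t`, and the remaining children of `a :: t` are exactly the children of `t`, contributing
`P t - 1` by induction; in total `1 + a * P t + (P t - 1) = P (a :: t)`. Solutions of the
recursion are unique because every child label has a strictly smaller entry sum.
-/

namespace DecoratedTree

def child (l : List ℕ) (i : Fin l.length) : List ℕ :=
  l.drop (i.1 + 1) ++ (if l.get i = 1 then [] else [l.get i - 1])

lemma child_pos {l : List ℕ} (hl : ∀ x ∈ l, 1 ≤ x) (i : Fin l.length) :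
    ∀ x ∈ child l i, 1 ≤ x := by
  have hi : 1 ≤ l.get i := hl _ (List.get_mem l i)
  intro x hx
  rcases List.mem_append.1 hx with h | h
  · exact hl x (List.mem_of_mem_drop h)
  · split at h
    · simp at h
    · rw [List.mem_singleton.1 h]
      omega

lemma sum_child_lt {l : List ℕ} (hl : ∀ x ∈ l, 1 ≤ x) (i : Fin l.length) :
    (child l i).sum < l.sum := by
  have hi : 1 ≤ l.get i := hl _ (List.get_mem l i)
  have hsplit : l.sum = (l.take i).sum + (l.get i + (l.drop (i.1 + 1)).sum) := by
    rw [← List.sum_take_add_sum_drop l i, List.drop_eq_getElem_cons i.2, List.sum_cons]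
    rfl
  unfold child
  split <;> simp only [List.sum_append, List.sum_nil, List.sum_singleton] <;> omega

lemma sum_child_cons (f : List ℕ → ℕ) (a : ℕ) (t : List ℕ) :
    ∑ i, f (child (a :: t) i) = f (child (a :: t) ⟨0, by simp⟩) + ∑ i, f (child t i) :=
  Fin.sum_univ_succ (n := t.length) _

lemma prod_child_cons_zero {a : ℕ} (t : List ℕ) (ha : 1 ≤ a) :
    ((child (a :: t) ⟨0, by simp⟩).map (· + 1)).prod = a * (t.map (· + 1)).prod := by
  unfold child
  split
  · simp_all
  · simp [Nat.sub_add_cancel ha, mul_comm]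

theorem prod_map_succ_eq_one_add_sum_child (l : List ℕ) (hl : ∀ x ∈ l, 1 ≤ x) :
    (l.map (· + 1)).prod = 1 + ∑ i, ((child l i).map (· + 1)).prod := by
  induction l with
  | nil => simp
  | cons a t ih =>
    have ha : 1 ≤ a := hl a List.mem_cons_self
    rw [sum_child_cons (fun c => (c.map (· + 1)).prod), prod_child_cons_zero t ha,
      ← add_assoc, add_comm 1, add_assoc, ← ih fun x hx => hl x (List.mem_cons_of_mem a hx)]
    simp only [List.map_cons, List.prod_cons]
    ring

theorem eq_of_eq_one_add_sum_child {V W : List ℕ → ℕ}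
    (hV : ∀ l : List ℕ, (∀ x ∈ l, 1 ≤ x) → V l = 1 + ∑ i, V (child l i))
    (hW : ∀ l : List ℕ, (∀ x ∈ l, 1 ≤ x) → W l = 1 + ∑ i, W (child l i))
    (l : List ℕ) (hl : ∀ x ∈ l, 1 ≤ x) : V l = W l := by
  rw [hV l hl, hW l hl]
  congr 1
  refine Finset.sum_congr rfl fun i _ => ?_
  exact eq_of_eq_one_add_sum_child hV hW (child l i) (child_pos hl i)
termination_by l.sum
decreasing_by exact sum_child_lt hl i

end DecoratedTree

/-- Let `V` be the vertex-count of the decorated rooted tree `T(n_1,…,n_k)`: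
the root of `T(l)` has one child for each entry of `l`, the `i`-th child being
the root of `T(n_{i+1},…,n_k, n_i − 1)` with the last entry omitted when
`n_i = 1`.  For positive entries, `T(n_1,…,n_k)` has `∏ (n_i + 1)` vertices. -/
theorem stmt_13 (V : List ℕ → ℕ)
    (hrec : ∀ l : List ℕ, (∀ i ∈ l, 1 ≤ i) →
      V l = 1 + ∑ i : Fin l.length,
        V (l.drop (i.1 + 1) ++ (if l.get i = 1 then [] else [l.get i - 1])))
    (l : List ℕ) (hl : ∀ i ∈ l, 1 ≤ i) :
    V l = (l.map (· + 1)).prod :=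
  DecoratedTree.eq_of_eq_one_add_sum_child hrec
    DecoratedTree.prod_map_succ_eq_one_add_sum_child l hl
end

section
/- Let Γ be the group of affine bijections of ℝ generated by three reflections x ↦ a−x, x ↦ b−x, x ↦ c−x with a, b, c distinct integers. Then Γ is isomorphic to the infinite dihedral group, and its subgroup of translations is generated by translation by gcd(b−a, c−b) (i.e., equals gcd(b−a,c−b)·ℤ acting by translations). -/
/-!
The composite of the reflections `x ↦ s - x` and `x ↦ t - x` is the translation by `s - t`, and
a translation composed with a reflection is again a reflection. So, with `g = gcd (b - a) (c - b)`,
the group generated by the three reflections consists of the translations by `gℤ` (reached from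
`b - a` and `c - b` by Bézout) and the reflections `x ↦ a - kg - x`. Sending the rotation `r k`
of `DihedralGroup 0` to translation by `kg` and `sr k` to `x ↦ a - kg - x` is a homomorphism onto
this group, injective because `g ≠ 0` and no reflection is a translation.
-/

/-- The reflection `x ↦ t − x` of the real line. -/
def reflAt (t : ℝ) : Equiv.Perm ℝ where
  toFun x := t - x
  invFun x := t - x
  left_inv x := by ring
  right_inv x := by ring

@[simp]
lemma reflAt_apply (t x : ℝ) : reflAt t x = t - x := rfl

lemma reflAt_mul_reflAt (s t : ℝ) : reflAt s * reflAt t = Equiv.addRight (s - t) := by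
  ext x; simp only [Equiv.Perm.mul_apply, reflAt_apply, Equiv.coe_addRight]; ring

lemma reflAt_mul_addRight (s t : ℝ) : reflAt s * Equiv.addRight t = reflAt (s - t) := by
  ext x; simp only [Equiv.Perm.mul_apply, reflAt_apply, Equiv.coe_addRight]; ring

lemma addRight_mul_reflAt (s t : ℝ) : Equiv.addRight t * reflAt s = reflAt (s + t) := by
  ext x; simp only [Equiv.Perm.mul_apply, reflAt_apply, Equiv.coe_addRight]; ring

lemma reflAt_ne_addRight (s t : ℝ) : reflAt s ≠ Equiv.addRight t := by
  intro h
  have h₀ := congr($h 0)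
  have h₁ := congr($h 1)
  simp only [reflAt_apply, Equiv.coe_addRight] at h₀ h₁
  linarith

section DihedralAffine

variable {n : ℕ} (a : ℝ) (τ : ZMod n →+ ℝ)

def dihedralAffine : DihedralGroup n →* Equiv.Perm ℝ where
  toFun
    | .r k => Equiv.addRight (τ k)
    | .sr k => reflAt (a - τ k)
  map_one' := by rw [DihedralGroup.one_def]; simp
  map_mul' := by
    rintro (i | i) (j | j) <;>
      simp only [DihedralGroup.r_mul_r, DihedralGroup.r_mul_sr, DihedralGroup.sr_mul_r,
        DihedralGroup.sr_mul_sr, map_add, map_sub, ← Equiv.addRight_add, reflAt_mul_reflAt,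
        reflAt_mul_addRight, addRight_mul_reflAt] <;>
      congr 1 <;> ring

@[simp]
lemma dihedralAffine_r (k : ZMod n) : dihedralAffine a τ (.r k) = Equiv.addRight (τ k) := rfl

@[simp]
lemma dihedralAffine_sr (k : ZMod n) : dihedralAffine a τ (.sr k) = reflAt (a - τ k) := rfl

variable {a τ}

lemma dihedralAffine_injective (hτ : Function.Injective τ) :
    Function.Injective (dihedralAffine a τ) := by
  rintro (i | i) (j | j) h <;>
    simp only [dihedralAffine_r, dihedralAffine_sr] at h
  · rw [hτ (add_left_cancel congr($h 0))]
  · exact absurd h.symm (reflAt_ne_addRight _ _)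
  · exact absurd h (reflAt_ne_addRight _ _)
  · have := congr($h 0)
    simp only [reflAt_apply, sub_zero, sub_right_inj] at this
    rw [hτ this]

lemma addRight_mem_range_dihedralAffine_iff (t : ℝ) :
    Equiv.addRight t ∈ (dihedralAffine a τ).range ↔ t ∈ τ.range := by
  constructor
  · rintro ⟨i | i, h⟩
    · exact ⟨i, by simpa using congr($h 0)⟩
    · exact absurd h (reflAt_ne_addRight _ _)
  · rintro ⟨i, rfl⟩
    exact ⟨.r i, rfl⟩

lemma reflAt_mem_range_dihedralAffine_iff (s : ℝ) :
    reflAt s ∈ (dihedralAffine a τ).range ↔ a - s ∈ τ.range := by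
  constructor
  · rintro ⟨i | i, h⟩
    · exact absurd h.symm (reflAt_ne_addRight _ _)
    · have := congr($h 0)
      simp only [dihedralAffine_sr, reflAt_apply, sub_zero] at this
      exact ⟨i, by linarith⟩
  · rintro ⟨i, hi⟩
    exact ⟨.sr i, by rw [dihedralAffine_sr, hi, sub_sub_cancel]⟩

lemma range_dihedralAffine_le {H : Subgroup (Equiv.Perm ℝ)} (ha : reflAt a ∈ H)
    (hτ : ∀ t ∈ τ.range, Equiv.addRight t ∈ H) : (dihedralAffine a τ).range ≤ H := by
  rintro _ ⟨i | i, rfl⟩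
  · exact hτ _ ⟨i, rfl⟩
  · rw [dihedralAffine_sr, ← reflAt_mul_addRight]
    exact mul_mem ha (hτ _ ⟨i, rfl⟩)

end DihedralAffine

/-- `zmultiplesHom ℝ g` retyped on `ZMod 0`, which is `ℤ` by definition. -/
def zmodZeroMultiplesHom (g : ℝ) : ZMod 0 →+ ℝ := zmultiplesHom ℝ g

lemma zmodZeroMultiplesHom_apply (g : ℝ) (k : ℤ) : zmodZeroMultiplesHom g k = k * g :=
  zsmul_eq_mul g k

lemma zmodZeroMultiplesHom_injective {g : ℝ} (hg : g ≠ 0) :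
    Function.Injective (zmodZeroMultiplesHom g) := by
  intro i j h
  rw [zmodZeroMultiplesHom_apply g i, zmodZeroMultiplesHom_apply g j] at h
  exact Int.cast_injective (mul_right_cancel₀ hg h)

lemma mem_range_zmodZeroMultiplesHom_iff (g t : ℝ) :
    t ∈ (zmodZeroMultiplesHom g).range ↔ ∃ k : ℤ, t = k * g := by
  simp only [AddMonoidHom.mem_range, eq_comm (a := t)]
  exact exists_congr fun k ↦ by rw [zmodZeroMultiplesHom_apply g k]

lemma addRight_gcd_mem {H : Subgroup (Equiv.Perm ℝ)} {x y : ℤ}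
    (hx : Equiv.addRight (x : ℝ) ∈ H) (hy : Equiv.addRight (y : ℝ) ∈ H) :
    Equiv.addRight ((Int.gcd x y : ℤ) : ℝ) ∈ H := by
  have bezout : Equiv.addRight ((Int.gcd x y : ℤ) : ℝ) =
      Equiv.addRight (y : ℝ) ^ Int.gcdB x y * Equiv.addRight (x : ℝ) ^ Int.gcdA x y := by
    rw [Equiv.zsmul_addRight, Equiv.zsmul_addRight, ← Equiv.addRight_add, Int.gcd_eq_gcd_ab]
    congr 1
    push_cast
    ring
  rw [bezout]
  exact mul_mem (zpow_mem hy _) (zpow_mem hx _)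

lemma closure_reflAt_eq_range_dihedralAffine (a b c : ℤ) :
    Subgroup.closure {reflAt (a : ℝ), reflAt (b : ℝ), reflAt (c : ℝ)} =
      (dihedralAffine a (zmodZeroMultiplesHom ((Int.gcd (b - a) (c - b) : ℤ) : ℝ))).range := by
  set g : ℤ := (Int.gcd (b - a) (c - b) : ℤ)
  apply le_antisymm
  · rw [Subgroup.closure_le]
    have hmem : ∀ x : ℤ, g ∣ a - x →
        reflAt (x : ℝ) ∈ (dihedralAffine a (zmodZeroMultiplesHom (g : ℝ))).range := by
      rintro x ⟨k, hk⟩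
      rw [reflAt_mem_range_dihedralAffine_iff, mem_range_zmodZeroMultiplesHom_iff]
      exact ⟨k, by rw [← Int.cast_sub, hk]; push_cast; ring⟩
    have hba : g ∣ b - a := Int.gcd_dvd_left _ _
    have hcb : g ∣ c - b := Int.gcd_dvd_right _ _
    rintro _ (rfl | rfl | rfl)
    · exact hmem a (by simp)
    · exact hmem b (dvd_sub_comm.mp hba)
    · refine hmem c ?_
      rw [show a - c = -((b - a) + (c - b)) by ring]
      exact (dvd_add hba hcb).neg_right
  · set Γ := Subgroup.closure {reflAt (a : ℝ), reflAt (b : ℝ), reflAt (c : ℝ)}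
    have hrefl : ∀ x ∈ ({a, b, c} : Set ℤ), reflAt (x : ℝ) ∈ Γ := by
      rintro x (rfl | rfl | rfl) <;> exact Subgroup.subset_closure (by simp)
    apply range_dihedralAffine_le (hrefl a (by simp))
    intro t ht
    obtain ⟨k, rfl⟩ := (mem_range_zmodZeroMultiplesHom_iff _ _).mp ht
    have hba : Equiv.addRight ((b - a : ℤ) : ℝ) ∈ Γ := by
      rw [Int.cast_sub, ← reflAt_mul_reflAt]
      exact mul_mem (hrefl b (by simp)) (hrefl a (by simp))
    have hcb : Equiv.addRight ((c - b : ℤ) : ℝ) ∈ Γ := by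
      rw [Int.cast_sub, ← reflAt_mul_reflAt]
      exact mul_mem (hrefl c (by simp)) (hrefl b (by simp))
    rw [← zsmul_eq_mul, ← Equiv.zsmul_addRight]
    exact zpow_mem (addRight_gcd_mem hba hcb) k

theorem stmt_14_general (a b c : ℤ) (hab : a ≠ b)
    (Γ : Subgroup (Equiv.Perm ℝ))
    (hΓ : Γ = Subgroup.closure {reflAt (a : ℝ), reflAt (b : ℝ), reflAt (c : ℝ)}) :
    Nonempty (Γ ≃* DihedralGroup 0) ∧
    ∀ t : ℝ, (Equiv.addRight t ∈ Γ ↔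
      ∃ k : ℤ, t = (k : ℝ) * ((Int.gcd (b - a) (c - b) : ℤ) : ℝ)) := by
  have hg : ((Int.gcd (b - a) (c - b) : ℤ) : ℝ) ≠ 0 := by
    have := Int.gcd_pos_of_ne_zero_left (c - b) (sub_ne_zero.mpr hab.symm)
    positivity
  rw [closure_reflAt_eq_range_dihedralAffine] at hΓ
  subst hΓ
  refine ⟨⟨(MonoidHom.ofInjective
    (dihedralAffine_injective (zmodZeroMultiplesHom_injective hg))).symm⟩, fun t ↦ ?_⟩
  rw [addRight_mem_range_dihedralAffine_iff, mem_range_zmodZeroMultiplesHom_iff]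

/-- The group generated by three reflections `x ↦ a−x`, `x ↦ b−x`, `x ↦ c−x`
with `a, b, c` distinct integers is infinite dihedral, and its translations are
exactly the translations by multiples of `gcd (b−a) (c−b)`. -/
theorem stmt_14 (a b c : ℤ) (hab : a ≠ b) (hbc : b ≠ c) (hac : a ≠ c)
    (Γ : Subgroup (Equiv.Perm ℝ))
    (hΓ : Γ = Subgroup.closure {reflAt (a : ℝ), reflAt (b : ℝ), reflAt (c : ℝ)}) :
    Nonempty (Γ ≃* DihedralGroup 0) ∧
    ∀ t : ℝ, (Equiv.addRight t ∈ Γ ↔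
      ∃ k : ℤ, t = (k : ℝ) * ((Int.gcd (b - a) (c - b) : ℤ) : ℝ)) :=
  stmt_14_general a b c hab Γ hΓ
end

section
/- The group generated by a finite set R of reflections of ℝ (maps x ↦ t_i − x with at least two distinct t_i) is isomorphic to {±1} ⋉ ℤ^d, where d is the dimension of the ℚ-vector space spanned by the translation lengths {t_i − t_j}. -/
namespace Stmt15Aux

open scoped Classical

abbrev Mmod (T : Finset ℝ) : Submodule ℤ ℝ :=
  Submodule.span ℤ {x : ℝ | ∃ t ∈ T, ∃ s ∈ T, x = t - s}

lemma diff_mem {T : Finset ℝ} {t s : ℝ} (ht : t ∈ T) (hs : s ∈ T) : t - s ∈ Mmod T :=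
  Submodule.subset_span ⟨t, ht, s, hs, rfl⟩

lemma struct (T : Finset ℝ) {t₀ : ℝ} (ht₀ : t₀ ∈ T) :
    ∀ f ∈ Subgroup.closure (reflAt '' (T : Set ℝ)),
      (∃ l ∈ Mmod T, ∀ x, f x = x + l) ∨ (∃ l ∈ Mmod T, ∀ x, f x = t₀ - x + l) := by
  intro f hf
  induction hf using Subgroup.closure_induction with
  | mem g hg =>
    obtain ⟨t, ht, rfl⟩ := hg
    exact Or.inr ⟨t - t₀, diff_mem ht ht₀, fun x => by
      show t - x = t₀ - x + (t - t₀); ring⟩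
  | one => exact Or.inl ⟨0, Submodule.zero_mem _, fun x => by simp⟩
  | mul g h hg hh ihg ihh =>
    rcases ihg with ⟨l, hl, hgl⟩ | ⟨l, hl, hgl⟩ <;>
      rcases ihh with ⟨m, hm, hhm⟩ | ⟨m, hm, hhm⟩
    · exact Or.inl ⟨m + l, Submodule.add_mem _ hm hl, fun x => by
        simp only [Equiv.Perm.mul_apply, hhm, hgl]; ring⟩
    · exact Or.inr ⟨m + l, Submodule.add_mem _ hm hl, fun x => by
        simp only [Equiv.Perm.mul_apply, hhm, hgl]; ring⟩
    · exact Or.inr ⟨l - m, Submodule.sub_mem _ hl hm, fun x => by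
        simp only [Equiv.Perm.mul_apply, hhm, hgl]; ring⟩
    · exact Or.inl ⟨l - m, Submodule.sub_mem _ hl hm, fun x => by
        simp only [Equiv.Perm.mul_apply, hhm, hgl]; ring⟩
  | inv g hg ihg =>
    rcases ihg with ⟨l, hl, hgl⟩ | ⟨l, hl, hgl⟩
    · refine Or.inl ⟨-l, Submodule.neg_mem _ hl, fun x => ?_⟩
      show g⁻¹ x = x + -l
      rw [Equiv.Perm.inv_def, Equiv.symm_apply_eq, hgl]; ring
    · refine Or.inr ⟨l, hl, fun x => ?_⟩
      show g⁻¹ x = t₀ - x + l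
      rw [Equiv.Perm.inv_def, Equiv.symm_apply_eq, hgl]; ring

lemma addRight_mem (T : Finset ℝ) : ∀ l ∈ Mmod T,
    (Equiv.addRight l : Equiv.Perm ℝ) ∈ Subgroup.closure (reflAt '' (T : Set ℝ)) := by
  set G := Subgroup.closure (reflAt '' (T : Set ℝ))
  have h1 : (Equiv.addRight (0:ℝ) : Equiv.Perm ℝ) = 1 := by ext x; simp
  have hadd : ∀ a b : ℝ, (Equiv.addRight (a + b) : Equiv.Perm ℝ)
      = Equiv.addRight a * Equiv.addRight b := by
    intro a b; ext x
    simp only [Equiv.coe_addRight, Equiv.Perm.mul_apply]; ring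
  let H : AddSubgroup ℝ :=
    { carrier := {l : ℝ | (Equiv.addRight l : Equiv.Perm ℝ) ∈ G}
      zero_mem' := by simp only [Set.mem_setOf_eq, h1]; exact one_mem G
      add_mem' := fun {a b} ha hb => by
        simp only [Set.mem_setOf_eq, hadd] at *
        exact mul_mem ha hb
      neg_mem' := fun {a} ha => by
        simp only [Set.mem_setOf_eq] at *
        have : (Equiv.addRight (-a) : Equiv.Perm ℝ) = (Equiv.addRight a)⁻¹ := by
          apply eq_inv_of_mul_eq_one_left
          rw [← hadd]; simp [h1]
        rw [this]; exact inv_mem ha }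
  intro l hl
  have hle : Mmod T ≤ AddSubgroup.toIntSubmodule H := by
    rw [Submodule.span_le]
    rintro x ⟨t, ht, s, hs, rfl⟩
    show (Equiv.addRight (t - s) : Equiv.Perm ℝ) ∈ G
    have : (Equiv.addRight (t - s) : Equiv.Perm ℝ) = reflAt t * reflAt s := by
      ext x
      show x + (t - s) = t - (s - x)
      ring
    rw [this]
    exact mul_mem (Subgroup.subset_closure ⟨t, ht, rfl⟩)
      (Subgroup.subset_closure ⟨s, hs, rfl⟩)
  exact hle hl

noncomputable def psi' {T : Finset ℝ} {d : ℕ} (ψ : Mmod T ≃ₗ[ℤ] (Fin d → ℤ)) (x : ℝ) :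
    Fin d → ℤ :=
  if h : x ∈ Mmod T then ψ ⟨x, h⟩ else 0

section Psi
variable {T : Finset ℝ} {d : ℕ} {ψ : Mmod T ≃ₗ[ℤ] (Fin d → ℤ)}

lemma psi'_zero : psi' ψ 0 = 0 := by
  rw [psi', dif_pos (Submodule.zero_mem _)]
  exact map_zero ψ

lemma psi'_add {a b : ℝ} (ha : a ∈ Mmod T) (hb : b ∈ Mmod T) :
    psi' ψ (a + b) = psi' ψ a + psi' ψ b := by
  rw [psi', psi', psi', dif_pos ha, dif_pos hb, dif_pos (Submodule.add_mem _ ha hb)]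
  exact map_add ψ ⟨a, ha⟩ ⟨b, hb⟩

lemma psi'_sub {a b : ℝ} (ha : a ∈ Mmod T) (hb : b ∈ Mmod T) :
    psi' ψ (a - b) = psi' ψ a - psi' ψ b := by
  rw [psi', psi', psi', dif_pos ha, dif_pos hb, dif_pos (Submodule.sub_mem _ ha hb)]
  exact map_sub ψ ⟨a, ha⟩ ⟨b, hb⟩

lemma psi'_inj {a b : ℝ} (ha : a ∈ Mmod T) (hb : b ∈ Mmod T)
    (h : psi' ψ a = psi' ψ b) : a = b := by
  rw [psi', psi', dif_pos ha, dif_pos hb] at h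
  exact congrArg Subtype.val (ψ.injective h)

end Psi

noncomputable def phiFun {T : Finset ℝ} {d : ℕ} (ψ : Mmod T ≃ₗ[ℤ] (Fin d → ℤ))
    (t₀ : ℝ) (f : Equiv.Perm ℝ) : Equiv.Perm (Fin d → ℤ) :=
  if f 1 - f 0 = -1 then
    (Equiv.neg (Fin d → ℤ)).trans (Equiv.addRight (psi' ψ (f 0 - t₀)))
  else Equiv.addRight (psi' ψ (f 0))

section Phi
variable {T : Finset ℝ} {d : ℕ} {ψ : Mmod T ≃ₗ[ℤ] (Fin d → ℤ)} {t₀ : ℝ}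

lemma phiFun_trans {f : Equiv.Perm ℝ} {l : ℝ} (hf : ∀ x, f x = x + l) :
    phiFun ψ t₀ f = Equiv.addRight (psi' ψ l) := by
  have h0 : f 0 = l := by rw [hf]; ring
  have h1 : f 1 - f 0 = 1 := by rw [hf, hf]; ring
  rw [phiFun, if_neg (by rw [h1]; norm_num), h0]

lemma phiFun_refl {f : Equiv.Perm ℝ} {l : ℝ} (hf : ∀ x, f x = t₀ - x + l) :
    phiFun ψ t₀ f
      = (Equiv.neg (Fin d → ℤ)).trans (Equiv.addRight (psi' ψ l)) := by
  have h0 : f 0 - t₀ = l := by rw [hf]; ring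
  have h1 : f 1 - f 0 = -1 := by rw [hf, hf]; ring
  rw [phiFun, if_pos h1, h0]

noncomputable def phi (ht₀ : t₀ ∈ T) (ψ : Mmod T ≃ₗ[ℤ] (Fin d → ℤ)) :
    (Subgroup.closure (reflAt '' (T : Set ℝ))) →* Equiv.Perm (Fin d → ℤ) where
  toFun f := phiFun ψ t₀ f.1
  map_one' := by
    show phiFun ψ t₀ (1 : Equiv.Perm ℝ) = 1
    rw [phiFun_trans (l := 0) (fun x => by simp)]
    ext v
    simp [psi'_zero]
  map_mul' f g := by
    show phiFun ψ t₀ ↑(f * g) = phiFun ψ t₀ ↑f * phiFun ψ t₀ ↑g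
    have hmul : ∀ x, (↑(f * g) : Equiv.Perm ℝ) x = f.1 (g.1 x) := fun x => rfl
    rcases struct T ht₀ f.1 f.2 with ⟨l, hl, hfl⟩ | ⟨l, hl, hfl⟩ <;>
      rcases struct T ht₀ g.1 g.2 with ⟨m, hm, hgm⟩ | ⟨m, hm, hgm⟩
    · rw [phiFun_trans (f := (↑(f*g) : Equiv.Perm ℝ)) (l := m + l)
        (fun x => by rw [hmul, hgm, hfl]; ring),
        phiFun_trans hfl, phiFun_trans hgm, psi'_add hm hl]
      ext v
      simp only [Equiv.coe_addRight, Equiv.Perm.mul_apply]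
      simp only [Pi.add_apply, Pi.smul_apply, Pi.neg_apply, Pi.sub_apply, smul_eq_mul]; ring
    · rw [phiFun_refl (f := (↑(f*g) : Equiv.Perm ℝ)) (l := m + l)
        (fun x => by rw [hmul, hgm, hfl]; ring),
        phiFun_trans hfl, phiFun_refl hgm, psi'_add hm hl]
      ext v
      simp only [Equiv.coe_addRight, Equiv.Perm.mul_apply, Equiv.trans_apply,
        Equiv.neg_apply]
      simp only [Pi.add_apply, Pi.smul_apply, Pi.neg_apply, Pi.sub_apply, smul_eq_mul]; ring
    · rw [phiFun_refl (f := (↑(f*g) : Equiv.Perm ℝ)) (l := l - m)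
        (fun x => by rw [hmul, hgm, hfl]; ring),
        phiFun_refl hfl, phiFun_trans hgm, psi'_sub hl hm]
      ext v
      simp only [Equiv.coe_addRight, Equiv.Perm.mul_apply, Equiv.trans_apply,
        Equiv.neg_apply]
      simp only [Pi.add_apply, Pi.smul_apply, Pi.neg_apply, Pi.sub_apply, smul_eq_mul]; ring
    · rw [phiFun_trans (f := (↑(f*g) : Equiv.Perm ℝ)) (l := l - m)
        (fun x => by rw [hmul, hgm, hfl]; ring),
        phiFun_refl hfl, phiFun_refl hgm, psi'_sub hl hm]
      ext v
      simp only [Equiv.coe_addRight, Equiv.Perm.mul_apply, Equiv.trans_apply,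
        Equiv.neg_apply]
      simp only [Pi.add_apply, Pi.smul_apply, Pi.neg_apply, Pi.sub_apply, smul_eq_mul]; ring

lemma phi_injective (ht₀ : t₀ ∈ T) (hd : 0 < d) (ψ : Mmod T ≃ₗ[ℤ] (Fin d → ℤ)) :
    Function.Injective (phi ht₀ ψ) := by
  rw [injective_iff_map_eq_one]
  intro f hf
  have hf' : phiFun ψ t₀ f.1 = 1 := hf
  rcases struct T ht₀ f.1 f.2 with ⟨l, hl, hfl⟩ | ⟨l, hl, hfl⟩
  · rw [phiFun_trans hfl] at hf'
    have h0 : psi' ψ l = 0 := by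
      have := congrArg (fun e : Equiv.Perm (Fin d → ℤ) => e 0) hf'
      simpa using this
    have : l = 0 := psi'_inj hl (Submodule.zero_mem _) (by rw [h0, psi'_zero])
    subst this
    ext x
    simpa using hfl x
  · exfalso
    rw [phiFun_refl hfl] at hf'
    have h0 : psi' ψ l = 0 := by
      have := congrArg (fun e : Equiv.Perm (Fin d → ℤ) => e 0) hf'
      simpa using this
    have := congrArg (fun e : Equiv.Perm (Fin d → ℤ) => e 1 ⟨0, hd⟩) hf'
    simp [h0, Equiv.neg_apply] at this

lemma phi_range (ht₀ : t₀ ∈ T) (ψ : Mmod T ≃ₗ[ℤ] (Fin d → ℤ)) :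
    (phi ht₀ ψ).range = Subgroup.closure
      ({Equiv.neg (Fin d → ℤ)} ∪
        Set.range (fun v : Fin d → ℤ => Equiv.addRight v)) := by
  apply le_antisymm
  · rintro _ ⟨f, rfl⟩
    show phiFun ψ t₀ f.1 ∈ _
    rcases struct T ht₀ f.1 f.2 with ⟨l, hl, hfl⟩ | ⟨l, hl, hfl⟩
    · rw [phiFun_trans hfl]
      exact Subgroup.subset_closure (Or.inr ⟨_, rfl⟩)
    · rw [phiFun_refl hfl]
      have : (Equiv.neg (Fin d → ℤ)).trans (Equiv.addRight (psi' ψ l))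
          = Equiv.addRight (psi' ψ l) * Equiv.neg (Fin d → ℤ) := rfl
      rw [this]
      exact mul_mem (Subgroup.subset_closure (Or.inr ⟨_, rfl⟩))
        (Subgroup.subset_closure (Or.inl rfl))
  · rw [Subgroup.closure_le]
    rintro x (rfl | ⟨v, rfl⟩)
    · refine ⟨⟨reflAt t₀, Subgroup.subset_closure ⟨t₀, ht₀, rfl⟩⟩, ?_⟩
      show phiFun ψ t₀ (reflAt t₀) = _
      rw [phiFun_refl (l := 0) (fun x => by show t₀ - x = t₀ - x + 0; ring)]
      ext w
      simp [psi'_zero, Equiv.neg_apply]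
    · have hmem : ((ψ.symm v : Mmod T) : ℝ) ∈ Mmod T := (ψ.symm v).2
      refine ⟨⟨Equiv.addRight ((ψ.symm v : Mmod T) : ℝ), addRight_mem T _ hmem⟩, ?_⟩
      show phiFun ψ t₀ (Equiv.addRight _) = _
      rw [phiFun_trans (l := ((ψ.symm v : Mmod T) : ℝ)) (fun x => rfl)]
      congr 1
      rw [psi', dif_pos hmem]
      simp

theorem aux (T : Finset ℝ) {t₀ : ℝ} (ht₀ : t₀ ∈ T) {d : ℕ} (hd : 0 < d)
    (ψ : Mmod T ≃ₗ[ℤ] (Fin d → ℤ)) :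
    Nonempty ((Subgroup.closure (reflAt '' (T : Set ℝ))) ≃*
      (Subgroup.closure
        ({Equiv.neg (Fin d → ℤ)} ∪
          Set.range (fun v : Fin d → ℤ => Equiv.addRight v)) :
        Subgroup (Equiv.Perm (Fin d → ℤ)))) :=
  ⟨(MonoidHom.ofInjective (phi_injective ht₀ hd ψ)).trans
    (MulEquiv.subgroupCongr (phi_range ht₀ ψ))⟩

end Phi

end Stmt15Aux

open Stmt15Aux

/-- The group generated by a finite set of reflections of `ℝ` (with at least two
distinct centres) is isomorphic to `{±1} ⋉ ℤ^d` — realised as the group of maps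
`x ↦ ±x + v` of `ℤ^d`, i.e. the group generated by negation and all
translations — where `d` is the dimension of the `ℚ`-vector space spanned by the
translation lengths `t_i − t_j`. -/
theorem stmt_15 (T : Finset ℝ) (hT : ∃ t ∈ T, ∃ s ∈ T, t ≠ s) (d : ℕ)
    (hd : d = Module.finrank ℚ
      (Submodule.span ℚ {x : ℝ | ∃ t ∈ T, ∃ s ∈ T, x = t - s})) :
    Nonempty ((Subgroup.closure (reflAt '' (T : Set ℝ))) ≃*
      (Subgroup.closure
        ({Equiv.neg (Fin d → ℤ)} ∪
          Set.range (fun v : Fin d → ℤ => Equiv.addRight v)) :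
        Subgroup (Equiv.Perm (Fin d → ℤ)))) := by
  classical
  obtain ⟨t₀, ht₀, s₀, hs₀, hne⟩ := hT
  set S : Set ℝ := {x : ℝ | ∃ t ∈ T, ∃ s ∈ T, x = t - s} with hSdef
  have hSfin : S.Finite := by
    apply Set.Finite.subset
      (Set.Finite.image (fun p : ℝ × ℝ => p.1 - p.2) ((T ×ˢ T).finite_toSet))
    rintro x ⟨t, ht, s, hs, rfl⟩
    exact ⟨(t, s), by simp [ht, hs]⟩
  haveI : Module.Finite ℤ (Mmod T) := Module.Finite.iff_fg.2 (Submodule.fg_span hSfin)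
  haveI : Module.Free ℤ (Mmod T) := inferInstance
  set b := Module.Free.chooseBasis ℤ (Mmod T) with hb
  set ι := Module.Free.ChooseBasisIndex ℤ (Mmod T) with hι
  set v : ι → ℝ := fun i => ((b i : Mmod T) : ℝ) with hv
  have hli : LinearIndependent ℤ v :=
    b.linearIndependent.map' (Mmod T).subtype (Submodule.ker_subtype _)
  have hliQ : LinearIndependent ℚ v := (LinearIndependent.iff_fractionRing ℤ ℚ).1 hli
  have h1 : Submodule.span ℤ (Set.range v) = Mmod T := by
    have : Set.range v = (Mmod T).subtype '' (Set.range b) := by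
      rw [← Set.range_comp]; rfl
    rw [this, Submodule.span_image, b.span_eq, Submodule.map_top,
      Submodule.range_subtype]
  have hspan : Submodule.span ℚ (Set.range v) = Submodule.span ℚ S := by
    rw [← Submodule.span_span_of_tower ℤ ℚ (Set.range v), h1,
      show (Mmod T : Set ℝ) = ((Submodule.span ℤ S : Submodule ℤ ℝ) : Set ℝ) from rfl,
      Submodule.span_span_of_tower]
  have hcard : Fintype.card ι = d := by
    rw [hd, ← hspan, finrank_span_eq_card hliQ]
  have hdpos : 0 < d := by
    rw [← hcard, Fintype.card_pos_iff]
    haveI : Nontrivial (Mmod T) :=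
      ⟨⟨⟨t₀ - s₀, diff_mem ht₀ hs₀⟩, 0, by
        simp only [ne_eq, Submodule.mk_eq_zero]
        exact sub_ne_zero.2 hne⟩⟩
    exact b.index_nonempty
  exact aux T ht₀ hdpos (b.reindex (Fintype.equivFinOfCardEq hcard)).equivFun
end

section
/- Concatenating a Kunz vector of a numerical semigroup with parts in {1,2,3} ending in a part equal to 3 with any composition having all parts in {1,2} yields again the Kunz vector of a numerical semigroup. Consequently, Kunz vectors with maximum 3 are in bijection with pairs (L, R) where L is a Kunz vector with parts in {1,2,3} ending in 3 and R is an arbitrary composition with parts in {1,2}. -/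
/-- The `j`-th part (`1`-indexed) of a composition given as a list. -/
def partAt (l : List ℕ) (j : ℕ) : ℕ := l.getD (j - 1) 0

/-- A list `(x_1, …, x_{m-1})` is a Kunz vector (NSG-composition) if its parts
are positive and it satisfies the NSG-inequalities (with `m = length + 1`). -/
def IsKunz (l : List ℕ) : Prop :=
  (∀ i ∈ l, 1 ≤ i) ∧
  (∀ s t : ℕ, 1 ≤ s → 1 ≤ t → s + t ≤ l.length →
    partAt l (s + t) ≤ partAt l s + partAt l t) ∧
  (∀ s t : ℕ, 1 ≤ s → 1 ≤ t → s + t ≤ l.length →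
    partAt l (l.length + 1 - s - t) ≤
      partAt l (l.length + 1 - s) + partAt l (l.length + 1 - t) + 1)

/-! With all parts in `{1,2,3}` the second family of NSG-inequalities holds automatically
(its left side is at most `3 ≤ 1 + 1 + 1`), and so does `x_{s+t} ≤ x_s + x_t` whenever
`x_{s+t} ≤ 2`. Hence appending parts in `{1,2}` to such a Kunz vector only creates inequalities
that hold trivially, while every inequality of a prefix is already one of the whole vector.
Splitting a Kunz vector with maximum `3` right after its last `3` therefore gives the
bijection, with inverse concatenation. -/

lemma partAt_mem {l : List ℕ} {j : ℕ} (h1 : 1 ≤ j) (h2 : j ≤ l.length) :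
    partAt l j ∈ l := by
  rw [partAt, List.getD_eq_getElem l 0 (by omega)]
  exact List.getElem_mem _

lemma partAt_append_of_le (L R : List ℕ) {j : ℕ} (h1 : 1 ≤ j) (h2 : j ≤ L.length) :
    partAt (L ++ R) j = partAt L j :=
  List.getD_append _ _ _ _ (by omega)

lemma partAt_append_of_lt (L R : List ℕ) {j : ℕ} (h : L.length < j) :
    partAt (L ++ R) j = partAt R (j - L.length) := by
  rw [partAt, partAt, List.getD_append_right _ _ _ _ (by omega)]
  congr 1
  omega

lemma isKunz_of_subadditive {l : List ℕ} (hbd : ∀ i ∈ l, 1 ≤ i ∧ i ≤ 3)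
    (hsub : ∀ s t : ℕ, 1 ≤ s → 1 ≤ t → s + t ≤ l.length →
      partAt l (s + t) ≤ partAt l s + partAt l t) :
    IsKunz l := by
  refine ⟨fun i hi => (hbd i hi).1, hsub, fun s t hs ht hst => ?_⟩
  have := hbd _ (partAt_mem (l := l) (j := l.length + 1 - s) (by omega) (by omega))
  have := hbd _ (partAt_mem (l := l) (j := l.length + 1 - t) (by omega) (by omega))
  have := hbd _ (partAt_mem (l := l) (j := l.length + 1 - s - t) (by omega) (by omega))
  omega

lemma bounds_of_mem_append {L R : List ℕ} (hL : ∀ i ∈ L, 1 ≤ i ∧ i ≤ 3)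
    (hR : ∀ i ∈ R, i = 1 ∨ i = 2) : ∀ i ∈ L ++ R, 1 ≤ i ∧ i ≤ 3 := by
  simp only [List.mem_append]
  rintro i (hi | hi)
  · exact hL i hi
  · rcases hR i hi with rfl | rfl <;> omega

theorem IsKunz.append {L R : List ℕ} (hK : IsKunz L) (hL : ∀ i ∈ L, i ≤ 3)
    (hR : ∀ i ∈ R, i = 1 ∨ i = 2) : IsKunz (L ++ R) := by
  have hbd := bounds_of_mem_append (fun i hi => ⟨hK.1 i hi, hL i hi⟩) hR
  refine isKunz_of_subadditive hbd fun s t hs ht hst => ?_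
  rw [List.length_append] at hst
  by_cases hst' : s + t ≤ L.length
  · rw [partAt_append_of_le L R (by omega) hst', partAt_append_of_le L R hs (by omega),
      partAt_append_of_le L R ht (by omega)]
    exact hK.2.1 s t hs ht hst'
  · have hsum : partAt (L ++ R) (s + t) ≤ 2 := by
      rw [partAt_append_of_lt L R (by omega)]
      have := hR _ (partAt_mem (l := R) (j := s + t - L.length) (by omega) (by omega))
      omega
    have := hbd _ (partAt_mem (l := L ++ R) (j := s) hs (by simp; omega))
    have := hbd _ (partAt_mem (l := L ++ R) (j := t) ht (by simp; omega))
    omega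

theorem IsKunz.of_isPrefix {L l : List ℕ} (hK : IsKunz l) (hLl : L <+: l)
    (hL : ∀ i ∈ L, i ≤ 3) : IsKunz L := by
  obtain ⟨R, rfl⟩ := hLl
  refine isKunz_of_subadditive (fun i hi => ⟨hK.1 i (List.mem_append_left _ hi), hL i hi⟩)
    fun s t hs ht hst => ?_
  rw [← partAt_append_of_le L R (by omega) hst, ← partAt_append_of_le L R hs (by omega),
    ← partAt_append_of_le L R ht (by omega)]
  exact hK.2.1 s t hs ht (by simp; omega)

namespace List

variable {α : Type*} {p : α → Bool}

theorem rdropWhile_append_of_forall (L : List α) {R : List α} (hR : ∀ x ∈ R, p x) :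
    (L ++ R).rdropWhile p = L.rdropWhile p := by
  induction R using List.reverseRecOn with
  | nil => rw [List.append_nil]
  | append_singleton R x ih =>
    rw [← List.append_assoc, rdropWhile_concat_pos _ _ _ (hR x (by simp)),
      ih fun y hy => hR y (by simp [hy])]

theorem rtakeWhile_append_of_forall (L : List α) {R : List α} (hR : ∀ x ∈ R, p x) :
    (L ++ R).rtakeWhile p = L.rtakeWhile p ++ R := by
  induction R using List.reverseRecOn with
  | nil => rw [List.append_nil, List.append_nil]
  | append_singleton R x ih =>
    rw [← List.append_assoc, rtakeWhile_concat_pos _ _ _ (hR x (by simp)),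
      ih fun y hy => hR y (by simp [hy]), List.append_assoc]

theorem getLast?_rdropWhile_ne_of_mem [DecidableEq α] {l : List α} {a : α} (ha : a ∈ l) :
    (l.rdropWhile fun x => decide (x ≠ a)).getLast? = some a := by
  have hne : (l.rdropWhile fun x => decide (x ≠ a)) ≠ [] := by
    rw [ne_eq, rdropWhile_eq_nil_iff]
    exact fun h => by simpa using h a ha
  rw [getLast?_eq_some_getLast hne]
  simpa using rdropWhile_last_not _ l hne

end List

def kunzMaxThreeEquiv :
    {l : List ℕ // IsKunz l ∧ (∀ i ∈ l, i ≤ 3) ∧ 3 ∈ l} ≃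
      {L : List ℕ // IsKunz L ∧ (∀ i ∈ L, i ≤ 3) ∧ L.getLast? = some 3} ×
      {R : List ℕ // ∀ i ∈ R, i = 1 ∨ i = 2} where
  toFun l :=
    have hL := List.rdropWhile_prefix (· ≠ 3) l.1
    have hR := List.rtakeWhile_suffix (· ≠ 3) l.1
    (⟨_, l.2.1.of_isPrefix hL fun i hi => l.2.2.1 i (hL.subset hi),
        fun i hi => l.2.2.1 i (hL.subset hi), List.getLast?_rdropWhile_ne_of_mem l.2.2.2⟩,
      ⟨_, fun i hi => by
        have := l.2.1.1 i (hR.subset hi)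
        have := l.2.2.1 i (hR.subset hi)
        have : i ≠ 3 := by simpa using List.mem_rtakeWhile_imp hi
        omega⟩)
  invFun x := ⟨x.1.1 ++ x.2.1, x.1.2.1.append x.1.2.2.1 x.2.2, fun i hi =>
    (bounds_of_mem_append (fun i hi => ⟨x.1.2.1.1 i hi, x.1.2.2.1 i hi⟩) x.2.2 i hi).2,
    List.mem_append_left _ (List.mem_of_getLast? x.1.2.2.2)⟩
  left_inv l := Subtype.ext List.rdropWhile_append_rtakeWhile
  right_inv := by
    rintro ⟨⟨L, -, -, hL⟩, ⟨R, hR⟩⟩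
    obtain ⟨L, rfl⟩ := List.getLast?_eq_some_iff.1 hL
    have hR' : ∀ x ∈ R, decide (x ≠ 3) = true := fun x hx => by
      rcases hR x hx with rfl | rfl <;> decide
    ext : 2
    · exact (List.rdropWhile_append_of_forall _ hR').trans
        (List.rdropWhile_concat_neg _ _ _ (by simp))
    · refine (List.rtakeWhile_append_of_forall _ hR').trans ?_
      rw [List.rtakeWhile_concat_neg _ _ _ (by simp), List.nil_append]

/-- Concatenating a Kunz vector with parts in `{1,2,3}` ending in `3` with any
composition with parts in `{1,2}` yields a Kunz vector; consequently Kunz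
vectors with maximum `3` correspond bijectively to such pairs. -/
theorem stmt_17 :
    (∀ L R : List ℕ, IsKunz L → (∀ i ∈ L, i ≤ 3) → L.getLast? = some 3 →
      (∀ i ∈ R, i = 1 ∨ i = 2) → IsKunz (L ++ R)) ∧
    Nonempty ({l : List ℕ // IsKunz l ∧ (∀ i ∈ l, i ≤ 3) ∧ 3 ∈ l} ≃
      {L : List ℕ // IsKunz L ∧ (∀ i ∈ L, i ≤ 3) ∧ L.getLast? = some 3} ×
      {R : List ℕ // ∀ i ∈ R, i = 1 ∨ i = 2}) :=
  ⟨fun _ _ hK hL _ hR => hK.append hL hR, ⟨kunzMaxThreeEquiv⟩⟩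
end

section
/- Let m ≥ 2 and let (x_1,...,x_{m-1}) be a sequence of integers with x_{m-1} = 3, x_j ∈ {2,3} for 1 ≤ j ≤ ⌊(m-1)/2⌋, and x_j ∈ {1,2,3} for ⌊(m-1)/2⌋ < j ≤ m-2. Then (x_1,...,x_{m-1}) satisfies all NSG-inequalities, i.e., it is the Kunz vector of a numerical semigroup whose Frobenius number is 3m − 1. -/
/-- Let `m ≥ 2` and `(x_1,…,x_{m-1})` satisfy `x_{m-1} = 3`, `x_j ∈ {2,3}` for
`1 ≤ j ≤ ⌊(m-1)/2⌋` and `x_j ∈ {1,2,3}` for `⌊(m-1)/2⌋ < j ≤ m-2`.  Then all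
NSG-inequalities hold, i.e. it is the Kunz vector of a numerical semigroup
(with Frobenius number `3m − 1`). -/
theorem stmt_18 (m : ℕ) (hm : 2 ≤ m) (x : ℕ → ℕ)
    (hlast : x (m - 1) = 3)
    (h1 : ∀ j, 1 ≤ j → j ≤ (m - 1) / 2 → x j = 2 ∨ x j = 3)
    (h2 : ∀ j, (m - 1) / 2 < j → j ≤ m - 2 → x j = 1 ∨ x j = 2 ∨ x j = 3) :
    (∀ s t : ℕ, 1 ≤ s → 1 ≤ t → s + t ≤ m - 1 → x (s + t) ≤ x s + x t) ∧
    (∀ s t : ℕ, 1 ≤ s → 1 ≤ t → s + t ≤ m - 1 →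
      x (m - s - t) ≤ x (m - s) + x (m - t) + 1) := by
  have hbound : ∀ j, 1 ≤ j → j ≤ m - 1 → 1 ≤ x j ∧ x j ≤ 3 := by
    intro j hj1 hj2
    rcases eq_or_lt_of_le hj2 with h | h
    · rw [h, hlast]; omega
    · have hj3 : j ≤ m - 2 := by omega
      rcases le_or_gt j ((m - 1) / 2) with hc | hc
      · rcases h1 j hj1 hc with h | h <;> omega
      · rcases h2 j hc hj3 with h | h | h <;> omega
  have hlow : ∀ j, 1 ≤ j → j ≤ (m - 1) / 2 → 2 ≤ x j := by
    intro j hj1 hj2; rcases h1 j hj1 hj2 with h | h <;> omega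
  constructor
  · intro s t hs ht hst
    have hB := hbound (s + t) (by omega) hst
    have hs' := hbound s hs (by omega)
    have ht' := hbound t ht (by omega)
    by_cases hc : 2 ≤ x s ∨ 2 ≤ x t
    · omega
    · have hsc : (m - 1) / 2 < s := by
        by_contra h; push_neg at h; have := hlow s hs h; omega
      have htc : (m - 1) / 2 < t := by
        by_contra h; push_neg at h; have := hlow t ht h; omega
      omega
  · intro s t hs ht hst
    have h1' := hbound (m - s - t) (by omega) (by omega)
    have h2' := hbound (m - s) (by omega) (by omega)
    have h3' := hbound (m - t) (by omega) (by omega)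
    omega
end

section
/- For a numerical semigroup S with multiplicity m and Kunz vector (x_1,...,x_{m-1}) whose maximum part equals 3 and is attained at the last index l = m−1 (i.e., x_{m-1} = 3 is maximal), and such that x_i + x_{m-1-i} ≥ 3 for all 1 ≤ i ≤ m−2, the genus g of S satisfies g ≥ 3 + 3(m−2)/2; in particular m ≤ 2g/3. -/
/-- For a Kunz vector `(x_1,…,x_{m-1})` ending with a maximal part
`x_{m-1} = 3` and satisfying `x_i + x_{m-1-i} ≥ 3`, the genus
`g = ∑ x_j` satisfies `g ≥ 3 + 3(m−2)/2`; in particular `m ≤ 2g/3`. -/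
theorem stmt_19 (m : ℕ) (hm : 2 ≤ m) (x : ℕ → ℕ) (g : ℕ)
    (hg : g = ∑ j ∈ Finset.Icc 1 (m - 1), x j)
    (hpos : ∀ j, 1 ≤ j → j ≤ m - 1 → 1 ≤ x j)
    (hlast : x (m - 1) = 3)
    (hmax : ∀ j, 1 ≤ j → j ≤ m - 1 → x j ≤ 3)
    (hpair : ∀ i, 1 ≤ i → i ≤ m - 2 → 3 ≤ x i + x (m - 1 - i)) :
    6 + 3 * (m - 2) ≤ 2 * g ∧ 3 * m ≤ 2 * g := by
  obtain ⟨k, rfl⟩ : ∃ k, m = k + 2 := ⟨m - 2, by omega⟩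
  have hk1 : k + 2 - 1 = k + 1 := rfl
  have hk2 : k + 2 - 2 = k := rfl
  rw [hk1] at hg hlast
  have hsplit : ∑ j ∈ Finset.Icc 1 (k+1), x j = (∑ j ∈ Finset.Icc 1 k, x j) + x (k+1) :=
    Finset.sum_Icc_succ_top (by omega) x
  have hrefl : ∑ j ∈ Finset.Icc 1 k, x (k+1-j) = ∑ j ∈ Finset.Icc 1 k, x j := by
    apply Finset.sum_nbij' (fun j => k+1-j) (fun j => k+1-j) <;>
      intro a ha <;> simp only [Finset.mem_Icc] at * <;> first | omega | (congr 1; omega)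
  have hbound : 3 * k ≤ ∑ j ∈ Finset.Icc 1 k, (x j + x (k+1-j)) := by
    calc 3 * k = ∑ j ∈ Finset.Icc 1 k, 3 := by
          rw [Finset.sum_const, Nat.card_Icc]; simp [Nat.mul_comm]
      _ ≤ _ := Finset.sum_le_sum fun i hi => by
          rw [Finset.mem_Icc] at hi
          have := hpair i hi.1 (by omega)
          simpa [show k + 2 - 1 - i = k + 1 - i from by omega] using this
  have h2g : 2 * g = 6 + ∑ j ∈ Finset.Icc 1 k, (x j + x (k+1-j)) := by
    rw [hg, hsplit, Finset.sum_add_distrib, hrefl, hlast]; ring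
  omega
end
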